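/- Let z = (z₁,z₂) ∈ ℝ², z ≠ (0,0), and let A(z) be the adjoint Jacobian matrix of f at z, with entries a₁₁ = (z₁²+3z₂²)z₁/((z₁²+z₂²)^{3/2}), a₁₂ = −(3z₁²+z₂²)z₂/((z₁²+z₂²)^{3/2}), a₂₁ = 2z₂³/((z₁²+z₂²)^{3/2}), a₂₂ = 2z₁³/((z₁²+z₂²)^{3/2}). Then the infimum of ‖A(z)y‖ over all y ∈ ℝ² with ‖y‖ = 1 equals 1. -/

import Mathlib

/-!
A direct computation gives `‖A(z) y‖² = ‖y‖² + 3 (z₂ y₁ - z₁ y₂)² / ‖z‖²`,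
so `‖A(z) y‖ ≥ 1` on the unit circle, with equality exactly when `y` is parallel to `z`.
-/

open Real

/-- `‖A(z) y‖²`, the radicand in the statement. -/
noncomputable def coderivNormSq (z₁ z₂ y₁ y₂ : ℝ) : ℝ :=
  ((z₁ ^ 2 + 3 * z₂ ^ 2) * z₁ / √(z₁ ^ 2 + z₂ ^ 2) ^ 3 * y₁
      + -((3 * z₁ ^ 2 + z₂ ^ 2) * z₂) / √(z₁ ^ 2 + z₂ ^ 2) ^ 3 * y₂) ^ 2
    + (2 * z₂ ^ 3 / √(z₁ ^ 2 + z₂ ^ 2) ^ 3 * y₁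
      + 2 * z₁ ^ 3 / √(z₁ ^ 2 + z₂ ^ 2) ^ 3 * y₂) ^ 2

lemma sq_add_sq_pos_of_prod_ne_zero {a b : ℝ} (h : (a, b) ≠ (0, 0)) : 0 < a ^ 2 + b ^ 2 := by
  have : a ≠ 0 ∨ b ≠ 0 := by simpa only [ne_eq, Prod.mk.injEq, not_and_or] using h
  rcases this with ha | hb <;> positivity

lemma div_sqrt_sq_add_div_sqrt_sq {a b : ℝ} (h : 0 < a ^ 2 + b ^ 2) :
    (a / √(a ^ 2 + b ^ 2)) ^ 2 + (b / √(a ^ 2 + b ^ 2)) ^ 2 = 1 := by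
  rw [div_pow, div_pow, sq_sqrt h.le, ← add_div, div_self h.ne']

lemma coderivNormSq_eq {z₁ z₂ : ℝ} (hz : 0 < z₁ ^ 2 + z₂ ^ 2) (y₁ y₂ : ℝ) :
    coderivNormSq z₁ z₂ y₁ y₂
      = y₁ ^ 2 + y₂ ^ 2 + 3 * (z₂ * y₁ - z₁ * y₂) ^ 2 / (z₁ ^ 2 + z₂ ^ 2) := by
  have hs : √(z₁ ^ 2 + z₂ ^ 2) ≠ 0 := (sqrt_pos.mpr hz).ne'
  have hcube : √(z₁ ^ 2 + z₂ ^ 2) ^ 3 = √(z₁ ^ 2 + z₂ ^ 2) * (z₁ ^ 2 + z₂ ^ 2) := by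
    rw [pow_succ', sq_sqrt hz.le]
  rw [coderivNormSq, hcube]
  field_simp
  rw [sq_sqrt hz.le]
  ring

lemma one_le_coderivNormSq {z₁ z₂ y₁ y₂ : ℝ} (hz : 0 < z₁ ^ 2 + z₂ ^ 2)
    (hy : y₁ ^ 2 + y₂ ^ 2 = 1) : 1 ≤ coderivNormSq z₁ z₂ y₁ y₂ := by
  rw [coderivNormSq_eq hz, hy]
  have : 0 ≤ 3 * (z₂ * y₁ - z₁ * y₂) ^ 2 / (z₁ ^ 2 + z₂ ^ 2) := by positivity
  linarith

lemma coderivNormSq_div_norm {z₁ z₂ : ℝ} (hz : 0 < z₁ ^ 2 + z₂ ^ 2) :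
    coderivNormSq z₁ z₂ (z₁ / √(z₁ ^ 2 + z₂ ^ 2)) (z₂ / √(z₁ ^ 2 + z₂ ^ 2)) = 1 := by
  rw [coderivNormSq_eq hz, div_sqrt_sq_add_div_sqrt_sq hz]
  simp [mul_div_assoc', mul_comm]

/-- The infimum of `‖A(z) y‖` over unit vectors `y` equals `1`. -/
theorem coderivative_inf_norm (z₁ z₂ : ℝ) (hz : (z₁, z₂) ≠ (0, 0)) :
    sInf {r : ℝ | ∃ y₁ y₂ : ℝ, y₁ ^ 2 + y₂ ^ 2 = 1 ∧
      r = Real.sqrt (((z₁ ^ 2 + 3 * z₂ ^ 2) * z₁ / Real.sqrt (z₁ ^ 2 + z₂ ^ 2) ^ 3 * y₁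
            + -((3 * z₁ ^ 2 + z₂ ^ 2) * z₂) / Real.sqrt (z₁ ^ 2 + z₂ ^ 2) ^ 3 * y₂) ^ 2
          + (2 * z₂ ^ 3 / Real.sqrt (z₁ ^ 2 + z₂ ^ 2) ^ 3 * y₁
            + 2 * z₁ ^ 3 / Real.sqrt (z₁ ^ 2 + z₂ ^ 2) ^ 3 * y₂) ^ 2)} = 1 := by
  have hpos := sq_add_sq_pos_of_prod_ne_zero hz
  refine IsLeast.csInf_eq ⟨⟨z₁ / √(z₁ ^ 2 + z₂ ^ 2), z₂ / √(z₁ ^ 2 + z₂ ^ 2), ?_, ?_⟩, ?_⟩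
  · exact div_sqrt_sq_add_div_sqrt_sq hpos
  · rw [← coderivNormSq, coderivNormSq_div_norm hpos, sqrt_one]
  · rintro r ⟨y₁, y₂, hy, rfl⟩
    rw [← coderivNormSq, ← sqrt_one]
    exact sqrt_le_sqrt (one_le_coderivNormSq hpos hy)
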